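/- arXiv:2009.05069 — 4 statements merged into one kernel-verified Lean document; each statement's English description precedes it below -/
import Mathlib

section
/- The maximum winning probability of the CHSH game over all classical (local deterministic or shared-randomness) strategies is exactly 3/4. Concretely: for any probability distribution p over a finite index set I and any families of conditional distributions p_A(a|r_A,i), p_C(c|r_C,i) with a,c,r_A,r_C ∈ {0,1}, the quantity (1/4)·Σ_{r_A,r_C,a,c} [a ⊕ c = r_A·r_C] · Σ_i p(i)·p_A(a|r_A,i)·p_C(c|r_C,i) is at most 3/4, and this bound is attained. -/
private lemma chsh_key (x0 x1 y0 y1 : ℝ)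
    (hx0 : 0 ≤ x0) (hx0' : x0 ≤ 1) (hx1 : 0 ≤ x1) (hx1' : x1 ≤ 1)
    (hy0 : 0 ≤ y0) (hy0' : y0 ≤ 1) (hy1 : 0 ≤ y1) (hy1' : y1 ≤ 1) :
    x0*y0 + (1-x0)*(1-y0) + x0*y1 + (1-x0)*(1-y1) + x1*y0 + (1-x1)*(1-y0)
      + x1*(1-y1) + (1-x1)*y1 ≤ 3 := by
  nlinarith [mul_nonneg hx0 hy0, mul_nonneg hx0 hy1, mul_nonneg hx1 hy0,
    mul_nonneg hx1 hy1, mul_nonneg (sub_nonneg.2 hx0') (sub_nonneg.2 hy0'),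
    mul_nonneg (sub_nonneg.2 hx0') (sub_nonneg.2 hy1'),
    mul_nonneg (sub_nonneg.2 hx1') (sub_nonneg.2 hy0'),
    mul_nonneg (sub_nonneg.2 hx1') hy1, mul_nonneg hx1 (sub_nonneg.2 hy1'),
    mul_nonneg (sub_nonneg.2 hx0') hy0, mul_nonneg hx0 (sub_nonneg.2 hy0'),
    mul_nonneg (sub_nonneg.2 hx0') hy1, mul_nonneg hx0 (sub_nonneg.2 hy1'),
    mul_nonneg (sub_nonneg.2 hx1') hy0, mul_nonneg hx1 (sub_nonneg.2 hy0')]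

/-- The classical value of the CHSH game is 3/4: any shared-randomness strategy
wins with probability at most 3/4, and this bound is attained. -/
theorem chsh_classical_value :
    (∀ (I : Type) (_ : Fintype I) (p : I → ℝ) (pA pC : Bool → Bool → I → ℝ),
      (∀ i, 0 ≤ p i) → (∑ i, p i = 1) →
      (∀ a r i, 0 ≤ pA a r i) → (∀ r i, ∑ a, pA a r i = 1) →
      (∀ c r i, 0 ≤ pC c r i) → (∀ r i, ∑ c, pC c r i = 1) →
      (1/4 : ℝ) * ∑ rA : Bool, ∑ rC : Bool, ∑ a : Bool, ∑ c : Bool,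
        (if Bool.xor a c = (rA && rC) then (1:ℝ) else 0) *
          ∑ i, p i * pA a rA i * pC c rC i ≤ 3/4) ∧
    (∃ (n : ℕ) (p : Fin n → ℝ) (pA pC : Bool → Bool → Fin n → ℝ),
      (∀ i, 0 ≤ p i) ∧ (∑ i, p i = 1) ∧
      (∀ a r i, 0 ≤ pA a r i) ∧ (∀ r i, ∑ a, pA a r i = 1) ∧
      (∀ c r i, 0 ≤ pC c r i) ∧ (∀ r i, ∑ c, pC c r i = 1) ∧
      (1/4 : ℝ) * ∑ rA : Bool, ∑ rC : Bool, ∑ a : Bool, ∑ c : Bool,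
        (if Bool.xor a c = (rA && rC) then (1:ℝ) else 0) *
          ∑ i, p i * pA a rA i * pC c rC i = 3/4) := by
  constructor
  · intro I _ p pA pC hp hp1 hA hA1 hC hC1
    have hAf : ∀ r i, pA false r i = 1 - pA true r i := by
      intro r i; have := hA1 r i; simp [Fintype.sum_bool] at this; linarith
    have hCf : ∀ r i, pC false r i = 1 - pC true r i := by
      intro r i; have := hC1 r i; simp [Fintype.sum_bool] at this; linarith
    have hA' : ∀ r i, pA true r i ≤ 1 := by
      intro r i; have := hA false r i; rw [hAf] at this; linarith
    have hC' : ∀ r i, pC true r i ≤ 1 := by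
      intro r i; have := hC false r i; rw [hCf] at this; linarith
    simp only [Fintype.sum_bool]
    norm_num
    have key : ∀ i : I,
        p i * pA true false i * pC true false i
        + p i * pA false false i * pC false false i
        + (p i * pA true false i * pC true true i
        + p i * pA false false i * pC false true i)
        + (p i * pA true true i * pC true false i
        + p i * pA false true i * pC false false i)
        + (p i * pA true true i * pC false true i
        + p i * pA false true i * pC true true i)
        ≤ p i * 3 := by
      intro i
      have h := chsh_key (pA true false i) (pA true true i) (pC true false i)
        (pC true true i) (hA true false i) (hA' false i) (hA true true i)
        (hA' true i) (hC true false i) (hC' false i) (hC true true i) (hC' true i)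
      rw [hAf, hAf, hCf, hCf]
      nlinarith [hp i, mul_le_mul_of_nonneg_left h (hp i)]
    simp only [← Finset.sum_add_distrib]
    rw [show (3:ℝ)/4 = 1/4 * 3 by norm_num]
    refine mul_le_mul_of_nonneg_left ?_ (by norm_num)
    calc _ ≤ ∑ i, p i * 3 := Finset.sum_le_sum fun i _ => by linarith [key i]
      _ = 3 := by rw [← Finset.sum_mul, hp1, one_mul]
  · refine ⟨1, fun _ => 1, fun a _ _ => if a then 0 else 1,
      fun c _ _ => if c then 0 else 1, ?_, ?_, ?_, ?_, ?_, ?_, ?_⟩ <;>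
      simp [Fintype.sum_bool, Finset.filter_insert, Finset.filter_singleton] <;> norm_num
end

section
/- The quantum strategy in which Alice and Charlie each share a maximally entangled two-qubit state with Bob, Bob measures in the Bell basis, and Alice (resp. Charlie) measure in bases at angles {0, π/2} (resp. {π/4, 3π/4}) conditioned on their uniform inputs, wins the adaptive CHSH game with probability exactly 1/2 + 1/(2√2). Concretely, for each of Bob's four outcomes b, the conditional distribution P_{AC|R_A R_C, B=b}(ac|r_A r_C) takes values (1±1/√2)/4 with the sign pattern such that for each b the probability of satisfying the winning condition associated with b, averaged uniformly over (r_A, r_C), equals 1/2 + 1/(2√2). -/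
/-!
Bob's Bell measurement swaps the entanglement: given his outcome `b`, Alice and Charlie are left
with the Bell state `Ψ_b`, so for measurement vectors `|φ⟩, |ψ⟩` the amplitude is
`⟨φ ψ|Ψ_b⟩ / 2`, a cosine or sine of `(φ ∓ ψ)/2` divided by `2√2`. Squaring, every outcome has
probability `(1 ± cos (θ_A ∓ θ_C)) / 16` with sign `(-1)^(a ⊕ c)`, the shift by `π` of a flipped
outcome flipping the sign. At Alice's angles `0, π/2` and Charlie's `π/4, 3π/4` the correlator
`cos (θ_A ∓ θ_C)` is `±1/√2` with exactly the sign pattern of the winning condition attached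
to `b`, so for every input pair the two winning outcomes carry `(1 + 1/√2) / 8`.
-/

noncomputable section

/-- The qubit state `|θ⟩ = cos(θ/2)|0⟩ + sin(θ/2)|1⟩` (basis indexed by `Bool`,
`false = |0⟩`, `true = |1⟩`). -/
def ket (θ : ℝ) (x : Bool) : ℂ :=
  if x then (Real.sin (θ / 2) : ℂ) else (Real.cos (θ / 2) : ℂ)

/-- The basis vector of the angle-`θ` measurement basis `{|θ⟩, |θ+π⟩}`
corresponding to outcome `o` (`false ↦ |θ⟩`, `true ↦ |θ+π⟩`). -/
def mvec (θ : ℝ) (o : Bool) : Bool → ℂ :=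
  ket (if o then θ + Real.pi else θ)

/-- The Bell state `|Ψ_{ij}⟩`: `i` flips the second bit, `j` gives the relative
sign, so `Ψ_{00} = (|00⟩+|11⟩)/√2`, `Ψ_{01} = (|00⟩-|11⟩)/√2`,
`Ψ_{10} = (|01⟩+|10⟩)/√2`, `Ψ_{11} = (|01⟩-|10⟩)/√2`. -/
def bell (b : Bool × Bool) (x y : Bool) : ℂ :=
  if Bool.xor x y = b.1 then
    (if x then (if b.2 then (-1 : ℂ) else 1) else 1) * ((Real.sqrt 2)⁻¹ : ℝ)
  else 0

/-- The four-qubit state `|Ψ₀₀⟩_{AB} ⊗ |Ψ₀₀⟩_{B'C}` shared by the two sources. -/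
def sharedState (x y y' z : Bool) : ℂ :=
  bell (false, false) x y * bell (false, false) y' z

/-- Alice's measurement angles: `θ = 0` for input 0 and `θ = π/2` for input 1. -/
def angleA (r : Bool) : ℝ := if r then Real.pi / 2 else 0

/-- Charlie's measurement angles: `θ = π/4` for input 0 and `θ = 3π/4` for input 1. -/
def angleC (r : Bool) : ℝ := if r then 3 * Real.pi / 4 else Real.pi / 4

/-- The amplitude for Alice getting outcome `a`, Bob getting Bell-basis outcome
`b` on `BB'`, and Charlie getting outcome `c`, on inputs `rA, rC`. -/
def ampl (b : Bool × Bool) (a c rA rC : Bool) : ℂ :=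
  ∑ x : Bool, ∑ y : Bool, ∑ y' : Bool, ∑ z : Bool,
    (starRingEnd ℂ) (mvec (angleA rA) a x * bell b y y' * mvec (angleC rC) c z) *
      sharedState x y y' z

/-- Born-rule probability of the joint outcome `(a, b, c)` given inputs `(rA, rC)`. -/
def bornProb (b : Bool × Bool) (a c rA rC : Bool) : ℝ :=
  ‖ampl b a c rA rC‖ ^ 2

/-- The adaptive-CHSH winning condition associated with Bob's output `b`. -/
def adaptiveTarget : Bool × Bool → Bool → Bool → Bool
  | (false, false), rA, rC => Bool.xor (rA && rC) rC
  | (false, true),  rA, rC => Bool.xor (Bool.xor (rA && rC) rA) rC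
  | (true, false),  rA, rC => !(Bool.xor (Bool.xor (rA && rC) rA) rC)
  | (true, true),   rA, rC => !(Bool.xor (rA && rC) rC)

open Real

def boolSign (x : Bool) : ℝ := if x then -1 else 1

lemma bell_entanglement_swap (b : Bool × Bool) (u v : Bool → ℂ) :
    ∑ x : Bool, ∑ y : Bool, ∑ y' : Bool, ∑ z : Bool,
        (starRingEnd ℂ) (u x * bell b y y' * v z) * sharedState x y y' z
      = (starRingEnd ℂ) (∑ x : Bool, ∑ z : Bool, u x * bell b x z * v z) / 2 := by
  have h : ((√2 : ℝ) : ℂ) ^ 2 = 2 := by norm_cast; simp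
  obtain ⟨b1, b2⟩ := b
  cases b1 <;> cases b2 <;>
  · simp [sharedState, bell, map_mul]
    field_simp
    rw [h]
    ring

def bellOverlap : Bool × Bool → ℝ → ℝ → ℝ
  | (false, false), φ, ψ => cos ((φ - ψ) / 2)
  | (false, true), φ, ψ => cos ((φ + ψ) / 2)
  | (true, false), φ, ψ => sin ((φ + ψ) / 2)
  | (true, true), φ, ψ => sin ((ψ - φ) / 2)

lemma sum_ket_bell_ket (b : Bool × Bool) (φ ψ : ℝ) :
    ∑ x : Bool, ∑ z : Bool, ket φ x * bell b x z * ket ψ z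
      = ((bellOverlap b φ ψ / √2 : ℝ) : ℂ) := by
  obtain ⟨b1, b2⟩ := b
  cases b1 <;> cases b2 <;>
  · simp [bell, ket, bellOverlap, sub_div, add_div, cos_sub, cos_add, sin_add, sin_sub]
    ring

def bellCorrelation : Bool × Bool → ℝ → ℝ → ℝ
  | (false, false), θ, θ' => cos (θ - θ')
  | (false, true), θ, θ' => cos (θ + θ')
  | (true, false), θ, θ' => -cos (θ + θ')
  | (true, true), θ, θ' => -cos (θ - θ')

lemma bellOverlap_sq (b : Bool × Bool) (φ ψ : ℝ) :
    bellOverlap b φ ψ ^ 2 = (1 + bellCorrelation b φ ψ) / 2 := by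
  obtain ⟨b1, b2⟩ := b
  cases b1 <;> cases b2 <;> simp only [bellOverlap, bellCorrelation, sin_sq, cos_sq]
  · ring_nf
  · ring_nf
  · ring_nf
  · rw [← neg_sub ψ φ, cos_neg]; ring_nf

lemma bellCorrelation_outcome (b : Bool × Bool) (a c : Bool) (θ θ' : ℝ) :
    bellCorrelation b (if a then θ + π else θ) (if c then θ' + π else θ')
      = boolSign (a ^^ c) * bellCorrelation b θ θ' := by
  obtain ⟨b1, b2⟩ := b
  cases b1 <;> cases b2 <;> cases a <;> cases c <;>
  simp [bellCorrelation, boolSign, add_sub_right_comm, sub_add_eq_sub_sub, add_right_comm _ π,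
    ← add_assoc, cos_add_pi, cos_sub_pi]

lemma bornProb_eq (b : Bool × Bool) (a c rA rC : Bool) :
    bornProb b a c rA rC
      = (1 + boolSign (a ^^ c) * bellCorrelation b (angleA rA) (angleC rC)) / 16 := by
  rw [bornProb, ampl, bell_entanglement_swap, mvec, mvec, sum_ket_bell_ket, Complex.conj_ofReal,
    norm_div, Complex.norm_real, Real.norm_eq_abs, div_pow, sq_abs, div_pow, bellOverlap_sq,
    bellCorrelation_outcome, sq_sqrt zero_le_two]
  norm_num
  ring

lemma cos_angleA_sub_angleC (rA rC : Bool) :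
    cos (angleA rA - angleC rC) = boolSign (!rA && rC) * cos (π / 4) := by
  cases rA <;> cases rC <;>
    simp only [angleA, angleC, boolSign, Bool.false_eq_true, if_true, if_false,
      Bool.not_false, Bool.not_true, Bool.false_and, Bool.true_and]
  · rw [zero_sub, cos_neg, one_mul]
  · rw [zero_sub, cos_neg, show 3 * π / 4 = π - π / 4 by ring, cos_pi_sub, neg_one_mul]
  · rw [show π / 2 - π / 4 = π / 4 by ring, one_mul]
  · rw [show π / 2 - 3 * π / 4 = -(π / 4) by ring, cos_neg, one_mul]

lemma cos_angleA_add_angleC (rA rC : Bool) :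
    cos (angleA rA + angleC rC) = boolSign (rA || rC) * cos (π / 4) := by
  cases rA <;> cases rC <;>
    simp only [angleA, angleC, boolSign, Bool.false_eq_true, if_true, if_false,
      Bool.false_or, Bool.true_or]
  · rw [zero_add, one_mul]
  · rw [zero_add, show 3 * π / 4 = π - π / 4 by ring, cos_pi_sub, neg_one_mul]
  · rw [show π / 2 + π / 4 = π - π / 4 by ring, cos_pi_sub, neg_one_mul]
  · rw [show π / 2 + 3 * π / 4 = π / 4 + π by ring, cos_add_pi, neg_one_mul]

lemma bellCorrelation_angleA_angleC (b : Bool × Bool) (rA rC : Bool) :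
    bellCorrelation b (angleA rA) (angleC rC) = boolSign (adaptiveTarget b rA rC) / √2 := by
  obtain ⟨b1, b2⟩ := b
  cases b1 <;> cases b2 <;> cases rA <;> cases rC <;>
    simp [bellCorrelation, adaptiveTarget, cos_angleA_add_angleC, cos_angleA_sub_angleC, boolSign,
      cos_pi_div_four, sqrt_div_self', neg_div]

lemma sum_winning_bornProb (b : Bool × Bool) (rA rC : Bool) :
    ∑ a : Bool, ∑ c : Bool,
      (if (a ^^ c) = adaptiveTarget b rA rC then bornProb b a c rA rC else 0)
      = (1 + 1 / √2) / 8 := by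
  simp only [bornProb_eq, bellCorrelation_angleA_angleC]
  generalize adaptiveTarget b rA rC = t
  cases t <;> simp [boolSign] <;> ring

/-- For each of Bob's four Bell-basis outcomes `b`, the probability (with inputs
uniform) of jointly obtaining `B = b` and winning the corresponding CHSH-type
game is `(1/4)·(1/2 + 1/(2√2))`; summing over `b`, the quantum strategy wins the
adaptive CHSH game with probability exactly `1/2 + 1/(2√2)`. -/
theorem quantum_adaptive_chsh_value (b : Bool × Bool) :
    (1/4 : ℝ) * ∑ rA : Bool, ∑ rC : Bool, ∑ a : Bool, ∑ c : Bool,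
      (if Bool.xor a c = adaptiveTarget b rA rC then bornProb b a c rA rC else 0)
    = (1/4) * (1/2 + 1/(2 * Real.sqrt 2)) := by
  simp only [sum_winning_bornProb, Finset.sum_const, Finset.card_univ, Fintype.card_bool]
  ring

end
end

section
/- Any conditional distribution of the form P(ac|r_A r_C) = Σ_i p_i · q_A(a|r_A,i) · q_C(c|r_C,i), where p is a probability distribution over a finite set and q_A, q_C are conditional distributions, achieves winning probability at most 3/4 in every one of the four CHSH-type games defined by the adaptive-CHSH winning conditions. -/
lemma chsh_core (x0 x1 y0 y1 : ℝ) (h0 : 0 ≤ x0) (h1 : x0 ≤ 1) (h2 : 0 ≤ x1) (h3 : x1 ≤ 1)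
    (h4 : 0 ≤ y0) (h5 : y0 ≤ 1) (h6 : 0 ≤ y1) (h7 : y1 ≤ 1) :
    ((x0*y0+(1-x0)*(1-y0)) + (x0*(1-y1)+(1-x0)*y1) + (x1*y0+(1-x1)*(1-y0)) + (x1*y1+(1-x1)*(1-y1)) ≤ 3) ∧
    ((x0*y0+(1-x0)*(1-y0)) + (x0*(1-y1)+(1-x0)*y1) + (x1*(1-y0)+(1-x1)*y0) + (x1*(1-y1)+(1-x1)*y1) ≤ 3) ∧
    ((x0*(1-y0)+(1-x0)*y0) + (x0*y1+(1-x0)*(1-y1)) + (x1*y0+(1-x1)*(1-y0)) + (x1*y1+(1-x1)*(1-y1)) ≤ 3) ∧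
    ((x0*(1-y0)+(1-x0)*y0) + (x0*y1+(1-x0)*(1-y1)) + (x1*(1-y0)+(1-x1)*y0) + (x1*(1-y1)+(1-x1)*y1) ≤ 3) := by
  refine ⟨?_, ?_, ?_, ?_⟩ <;>
  nlinarith [mul_nonneg h0 h4, mul_nonneg h0 h6, mul_nonneg h2 h4, mul_nonneg h2 h6,
    mul_nonneg (by linarith : (0:ℝ) ≤ 1-x0) h4, mul_nonneg (by linarith : (0:ℝ) ≤ 1-x0) h6,
    mul_nonneg (by linarith : (0:ℝ) ≤ 1-x1) h4, mul_nonneg (by linarith : (0:ℝ) ≤ 1-x1) h6,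
    mul_nonneg h0 (by linarith : (0:ℝ) ≤ 1-y0), mul_nonneg h0 (by linarith : (0:ℝ) ≤ 1-y1),
    mul_nonneg h2 (by linarith : (0:ℝ) ≤ 1-y0), mul_nonneg h2 (by linarith : (0:ℝ) ≤ 1-y1),
    mul_nonneg (by linarith : (0:ℝ) ≤ 1-x0) (by linarith : (0:ℝ) ≤ 1-y0),
    mul_nonneg (by linarith : (0:ℝ) ≤ 1-x0) (by linarith : (0:ℝ) ≤ 1-y1),
    mul_nonneg (by linarith : (0:ℝ) ≤ 1-x1) (by linarith : (0:ℝ) ≤ 1-y0),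
    mul_nonneg (by linarith : (0:ℝ) ≤ 1-x1) (by linarith : (0:ℝ) ≤ 1-y1)]

/-- Any local-hidden-variable behaviour
`P(ac|r_A r_C) = Σ_i p_i q_A(a|r_A,i) q_C(c|r_C,i)` wins each of the four
CHSH-type games of the adaptive CHSH game with probability at most `3/4`. -/
theorem lhv_bound_all_four_chsh_games
    (I : Type) (_ : Fintype I) (p : I → ℝ) (qA qC : Bool → Bool → I → ℝ)
    (hp : ∀ i, 0 ≤ p i) (hp1 : ∑ i, p i = 1)
    (hqA : ∀ a r i, 0 ≤ qA a r i) (hqA1 : ∀ r i, ∑ a, qA a r i = 1)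
    (hqC : ∀ c r i, 0 ≤ qC c r i) (hqC1 : ∀ r i, ∑ c, qC c r i = 1)
    (b : Bool × Bool) :
    (1/4 : ℝ) * ∑ rA : Bool, ∑ rC : Bool, ∑ a : Bool, ∑ c : Bool,
      (if Bool.xor a c = adaptiveTarget b rA rC then (1:ℝ) else 0) *
        ∑ i, p i * qA a rA i * qC c rC i ≤ 3/4 := by
  have final : ∀ f : I → ℝ, (∀ i, f i ≤ 3 * p i) → (1/4 : ℝ) * ∑ i, f i ≤ 3/4 := by
    intro f hf
    have h1 : ∑ i, f i ≤ ∑ i, 3 * p i := Finset.sum_le_sum fun i _ => hf i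
    rw [← Finset.mul_sum, hp1] at h1
    linarith
  obtain ⟨b1, b2⟩ := b
  cases b1 <;> cases b2 <;>
    simp only [adaptiveTarget, Fintype.sum_bool, Bool.xor, Bool.and_false, Bool.and_true,
      Bool.false_and, Bool.true_and] <;>
    norm_num <;>
    simp only [← Finset.sum_add_distrib] <;>
    refine final _ fun i => ?_ <;>
    (have e1 : qA false false i = 1 - qA true false i := by
        have h := hqA1 false i; simp [Fintype.sum_bool] at h; linarith) <;>
    (have e2 : qA false true i = 1 - qA true true i := by
        have h := hqA1 true i; simp [Fintype.sum_bool] at h; linarith) <;>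
    (have e3 : qC false false i = 1 - qC true false i := by
        have h := hqC1 false i; simp [Fintype.sum_bool] at h; linarith) <;>
    (have e4 : qC false true i = 1 - qC true true i := by
        have h := hqC1 true i; simp [Fintype.sum_bool] at h; linarith) <;>
    rw [e1, e2, e3, e4] <;>
    (have H := chsh_core (qA true false i) (qA true true i) (qC true false i) (qC true true i)
      (hqA true false i) (by linarith [hqA false false i])
      (hqA true true i) (by linarith [hqA false true i])
      (hqC true false i) (by linarith [hqC false false i])
      (hqC true true i) (by linarith [hqC false true i])) <;>
    nlinarith [mul_le_mul_of_nonneg_left H.1 (hp i), mul_le_mul_of_nonneg_left H.2.1 (hp i),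
      mul_le_mul_of_nonneg_left H.2.2.1 (hp i), mul_le_mul_of_nonneg_left H.2.2.2 (hp i), hp i]
end

section
/- In a GPT possessing two perfectly distinguishable states S₀, S₁ (i.e., a two-outcome measurement M = {e, u − e} with e(S₀) = 1 and e(S₁) = 0), the following strategy wins the adaptive CHSH game with probability exactly 3/4: each source shares S₀ or S₁ uniformly at random (in product form with both parties), Alice and Charlie output their measurement outcome from M, and Bob outputs B = (β, m) where m ∈ {0,1} indicates whether his two outcomes from M differ and β is a uniformly random bit. Formally: the induced distribution P_{ABCR_AR_C} yields Σ Q·P = 3/4 where Q is the adaptive-CHSH winning indicator. -/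
/-- In a GPT with two perfectly distinguishable states `S₀ = S false` and
`S₁ = S true` (a two-outcome measurement `{e, u-e}` with `e(S₀)=1`, `e(S₁)=0`),
the classical strategy where each source shares `S₀` or `S₁` uniformly at
random, Alice and Charlie output their outcomes of `{e, u-e}`, and Bob outputs
`B = (β, m)` with `β` a uniform bit and `m` the XOR of his two outcomes of
`{e, u-e}`, wins the adaptive CHSH game with probability exactly `3/4`.
Here `pOut o s` is the Born probability of outcome `o` when measuring `S s`
(outcome `false` corresponds to the effect `e`). -/
theorem distinguishable_states_adaptive_chsh_three_quarters
    {V : Type*} [AddCommGroup V] [Module ℝ V]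
    (S : Bool → V) (e : V →ₗ[ℝ] ℝ)
    (h0 : e (S false) = 1) (h1 : e (S true) = 0)
    (pOut : Bool → Bool → ℝ)
    (hpOut : ∀ o s, pOut o s = if o then 1 - e (S s) else e (S s)) :
    (1/32 : ℝ) * ∑ s₁ : Bool, ∑ s₂ : Bool, ∑ β : Bool, ∑ rA : Bool, ∑ rC : Bool,
      ∑ a : Bool, ∑ c : Bool, ∑ o₁ : Bool, ∑ o₂ : Bool,
        (if Bool.xor a c = adaptiveTarget (β, Bool.xor o₁ o₂) rA rC then (1:ℝ) else 0)
          * pOut a s₁ * pOut c s₂ * pOut o₁ s₁ * pOut o₂ s₂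
      = 3/4 := by
  have hp : ∀ o s, pOut o s = if o = s then (1:ℝ) else 0 := by
    intro o s; rw [hpOut]; cases o <;> cases s <;> simp [h0, h1]
  simp only [hp, Fintype.sum_bool]
  norm_num [adaptiveTarget]
end
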